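/- Let f₁, …, f_n : ℝ^d → ℝ be differentiable and each L-smooth, f(x) = (1/n)∑_{j=1}^n f_j(x), and fix x, x̃ ∈ ℝ^d. For each worker i = 1,…,N let u_i = (1/B)∑_{a∈I_i}[∇f_a(x) − ∇f_a(x̃)], where the mini-batches I_i consist of B indices sampled uniformly and independently (with replacement, and independently across workers) from {1,…,n}. Let Y_1,…,Y_N be random vectors such that for each i, conditionally on the sampled mini-batches, E[‖Y_i − u_i‖² | I_1,…,I_N] ≤ κ·‖u_i‖², where κ = d·λ²/(4(2^{b−1}−1)²) + d_λ(1−λ)² for some λ ∈ (0,1], integer b ≥ 2 and integer 0 ≤ d_λ ≤ d. Set v = (1/N)∑_{i=1}^N Y_i + ∇f(x̃). Then E‖v − ∇f(x)‖² ≤ 2L²·[d·λ²/(4(2^{b−1}−1)²) + d_λ(1−λ)² + 1/(NB)]·‖x − x̃‖². -/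

import Mathlib

/-!
Write `v - ∇f(x) = (1/N) ∑ᵢ (Yᵢ - uᵢ) + e` with `e = (1/N) ∑ᵢ uᵢ - (∇f(x) - ∇f(x̃))` and use
`‖a + b‖² ≤ 2‖a‖² + 2‖b‖²`. Since `‖uᵢ‖ ≤ L ‖x - x̃‖`, the tower property bounds the mean
square of each quantization error by `κ L² ‖x - x̃‖²`. The term `e` is the error of the sample
mean of `N B` pairwise independent uniform draws from the population `gₖ(x) - gₖ(x̃)`, whose mean
is `∇f(x) - ∇f(x̃)`; the cross terms of the centred draws vanish by independence, so
`E‖e‖² ≤ (population second moment) / (N B) ≤ L² ‖x - x̃‖² / (N B)`.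
-/

open MeasureTheory ProbabilityTheory
open scoped ENNReal RealInnerProductSpace

theorem inv_card_mul_sum_le {ι : Type*} [Fintype ι] [Nonempty ι] {f : ι → ℝ} {r : ℝ}
    (hf : ∀ i, f i ≤ r) : (Fintype.card ι : ℝ)⁻¹ * ∑ i, f i ≤ r := by
  rw [inv_mul_le_iff₀ (by positivity)]
  simpa using Finset.sum_le_card_nsmul Finset.univ f r fun i _ => hf i

section NormedSpace

variable {E : Type*} [SeminormedAddCommGroup E]

theorem norm_add_sq_le_two_mul (a b : E) : ‖a + b‖ ^ 2 ≤ 2 * ‖a‖ ^ 2 + 2 * ‖b‖ ^ 2 := by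
  nlinarith [norm_add_le a b, norm_nonneg (a + b), sq_nonneg (‖a‖ - ‖b‖)]

variable [NormedSpace ℝ E]

theorem norm_inv_card_smul_sum_le {ι : Type*} [Fintype ι] [Nonempty ι] {v : ι → E} {r : ℝ}
    (hv : ∀ i, ‖v i‖ ≤ r) : ‖(Fintype.card ι : ℝ)⁻¹ • ∑ i, v i‖ ≤ r := by
  rw [norm_smul, Real.norm_of_nonneg (by positivity)]
  exact (mul_le_mul_of_nonneg_left (norm_sum_le _ _) (by positivity)).trans
    (inv_card_mul_sum_le hv)

theorem norm_inv_card_smul_sum_sq_le {ι : Type*} [Fintype ι] (v : ι → E) :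
    ‖(Fintype.card ι : ℝ)⁻¹ • ∑ i, v i‖ ^ 2 ≤ (Fintype.card ι : ℝ)⁻¹ * ∑ i, ‖v i‖ ^ 2 := by
  rcases isEmpty_or_nonempty ι with _ | _
  · simp
  have hsq : ‖∑ i, v i‖ ^ 2 ≤ Fintype.card ι * ∑ i, ‖v i‖ ^ 2 :=
    calc ‖∑ i, v i‖ ^ 2 ≤ (∑ i, ‖v i‖) ^ 2 := by gcongr; exact norm_sum_le _ _
      _ ≤ _ := sq_sum_le_card_mul_sum_sq
  rw [norm_smul, mul_pow, Real.norm_of_nonneg (by positivity)]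
  calc ((Fintype.card ι : ℝ)⁻¹) ^ 2 * ‖∑ i, v i‖ ^ 2
      ≤ ((Fintype.card ι : ℝ)⁻¹) ^ 2 * (Fintype.card ι * ∑ i, ‖v i‖ ^ 2) := by gcongr
    _ = (Fintype.card ι : ℝ)⁻¹ * ∑ i, ‖v i‖ ^ 2 := by field_simp

theorem inv_card_smul_sum_prod {ι κ : Type*} [Fintype ι] [Fintype κ] (v : ι × κ → E) :
    (Fintype.card (ι × κ) : ℝ)⁻¹ • ∑ p, v p =
      (Fintype.card ι : ℝ)⁻¹ • ∑ i, (Fintype.card κ : ℝ)⁻¹ • ∑ k, v (i, k) := by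
  rw [Fintype.sum_prod_type, ← Finset.smul_sum, smul_smul, Fintype.card_prod, Nat.cast_mul,
    mul_inv]

end NormedSpace

theorem hasGradientAt_const_mul_sum {E : Type*} [NormedAddCommGroup E] [InnerProductSpace ℝ E]
    [CompleteSpace E] {ι : Type*} [Fintype ι] {f : ι → E → ℝ} {f' : ι → E} {x : E}
    (hf : ∀ j, HasGradientAt (f j) (f' j) x) (c : ℝ) :
    HasGradientAt (fun y => c * ∑ j, f j y) (c • ∑ j, f' j) x := by
  rw [hasGradientAt_iff_hasFDerivAt, map_smul, map_sum]
  exact (HasFDerivAt.fun_sum fun j _ => (hf j).hasFDerivAt).const_mul c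

section Probability

variable {Ω : Type*} {mΩ : MeasurableSpace Ω} {μ : Measure Ω}

theorem integral_le_of_condExp_le_const [IsProbabilityMeasure μ] {m : MeasurableSpace Ω}
    (hm : m ≤ mΩ) {f : Ω → ℝ} {C : ℝ} (hf : ∀ᵐ ω ∂μ, μ[f | m] ω ≤ C) : ∫ ω, f ω ∂μ ≤ C := by
  rw [← integral_condExp hm]
  exact (integral_mono_ae integrable_condExp (integrable_const C) hf).trans_eq (by simp)

theorem memLp_comp_of_finite {E α : Type*} [NormedAddCommGroup E] [Finite α] [MeasurableSpace α]
    [DiscreteMeasurableSpace α] [IsFiniteMeasure μ] {X : Ω → α} (hX : Measurable X) (h : α → E)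
    (p : ℝ≥0∞) : MemLp (fun ω => h (X ω)) p μ :=
  (memLp_map_measure_iff .of_discrete hX.aemeasurable).1 .of_discrete

theorem integrable_norm_sample_mean_sub_sq {E ι α : Type*} [NormedAddCommGroup E]
    [NormedSpace ℝ E] [IsFiniteMeasure μ] [Fintype ι] [Finite α] [MeasurableSpace α]
    [DiscreteMeasurableSpace α] {X : ι → Ω → α} (hX : ∀ i, Measurable (X i)) (v : α → E) (m : E) :
    Integrable (fun ω => ‖(Fintype.card ι : ℝ)⁻¹ • ∑ i, v (X i ω) - m‖ ^ 2) μ :=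
  (memLp_comp_of_finite (measurable_pi_lambda _ hX)
    (fun J : ι → α => (Fintype.card ι : ℝ)⁻¹ • ∑ i, v (J i) - m) 2).integrable_norm_pow' (p := 2)

theorem integral_comp_of_uniform {E α : Type*} [NormedAddCommGroup E] [NormedSpace ℝ E]
    [CompleteSpace E] [Fintype α] [MeasurableSpace α] [DiscreteMeasurableSpace α]
    [IsFiniteMeasure μ] {X : Ω → α} (hX : Measurable X)
    (hunif : ∀ a, μ {ω | X ω = a} = (Fintype.card α : ℝ≥0∞)⁻¹) (h : α → E) :
    ∫ ω, h (X ω) ∂μ = (Fintype.card α : ℝ)⁻¹ • ∑ a, h a := by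
  rw [← integral_map hX.aemeasurable .of_discrete, integral_fintype .of_finite, Finset.smul_sum]
  refine Finset.sum_congr rfl fun a _ => ?_
  rw [Measure.real, Measure.map_apply hX (measurableSet_singleton a)]
  simp [Set.preimage, hunif]

theorem integral_norm_inv_card_smul_sum_add_sq_le {E ι : Type*} [NormedAddCommGroup E]
    [NormedSpace ℝ E] [Fintype ι] [Nonempty ι] {Z : ι → Ω → E} {e : Ω → E} {a b : ℝ}
    (hZ : ∀ i, Integrable (fun ω => ‖Z i ω‖ ^ 2) μ) (he : Integrable (fun ω => ‖e ω‖ ^ 2) μ)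
    (hZa : ∀ i, ∫ ω, ‖Z i ω‖ ^ 2 ∂μ ≤ a) (heb : ∫ ω, ‖e ω‖ ^ 2 ∂μ ≤ b) :
    ∫ ω, ‖(Fintype.card ι : ℝ)⁻¹ • ∑ i, Z i ω + e ω‖ ^ 2 ∂μ ≤ 2 * a + 2 * b := by
  have hZ_avg : Integrable (fun ω => (Fintype.card ι : ℝ)⁻¹ * ∑ i, ‖Z i ω‖ ^ 2) μ :=
    (integrable_finsetSum _ fun i _ => hZ i).const_mul _
  calc ∫ ω, ‖(Fintype.card ι : ℝ)⁻¹ • ∑ i, Z i ω + e ω‖ ^ 2 ∂μ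
      ≤ ∫ ω, (2 * ((Fintype.card ι : ℝ)⁻¹ * ∑ i, ‖Z i ω‖ ^ 2) + 2 * ‖e ω‖ ^ 2) ∂μ := by
        refine integral_mono_of_nonneg (.of_forall fun _ => by positivity)
          ((hZ_avg.const_mul 2).add (he.const_mul 2)) (.of_forall fun ω => ?_)
        dsimp only
        refine (norm_add_sq_le_two_mul _ _).trans ?_
        gcongr
        exact norm_inv_card_smul_sum_sq_le _
    _ = 2 * ((Fintype.card ι : ℝ)⁻¹ * ∑ i, ∫ ω, ‖Z i ω‖ ^ 2 ∂μ) + 2 * ∫ ω, ‖e ω‖ ^ 2 ∂μ := by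
        rw [integral_add (hZ_avg.const_mul 2) (he.const_mul 2), integral_const_mul,
          integral_const_mul, integral_const_mul, integral_finsetSum _ fun i _ => hZ i]
    _ ≤ 2 * a + 2 * b := by
        gcongr
        exact inv_card_mul_sum_le hZa

variable {E : Type*} [NormedAddCommGroup E] [InnerProductSpace ℝ E] [CompleteSpace E]

theorem integral_norm_sub_integral_sq [IsProbabilityMeasure μ] {X : Ω → E} (hX : MemLp X 2 μ) :
    ∫ ω, ‖X ω - μ[X]‖ ^ 2 ∂μ = ∫ ω, ‖X ω‖ ^ 2 ∂μ - ‖μ[X]‖ ^ 2 := by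
  have hX1 := hX.integrable one_le_two
  have hsq : Integrable (fun ω => ‖X ω‖ ^ 2) μ := hX.integrable_norm_pow' (p := 2)
  have hinner : Integrable (fun ω => 2 * ⟪μ[X], X ω⟫) μ := (hX1.const_inner _).const_mul 2
  have hsub : Integrable (fun ω => ‖X ω‖ ^ 2 - 2 * ⟪μ[X], X ω⟫) μ := hsq.sub hinner
  simp_rw [norm_sub_sq_real, real_inner_comm (μ[X])]
  rw [integral_add hsub (integrable_const _), integral_sub hsq hinner,
    integral_const_mul, integral_inner hX1, integral_const, real_inner_self_eq_norm_sq,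
    probReal_univ, one_smul]
  ring

variable [MeasurableSpace E] [BorelSpace E]

theorem integral_norm_sum_sq_of_indepFun [IsFiniteMeasure μ] {ι : Type*} [Fintype ι]
    {X : ι → Ω → E} (hX : ∀ i, MemLp (X i) 2 μ) (hmean : ∀ i, μ[X i] = 0)
    (hindep : Pairwise fun i j => IndepFun (X i) (X j) μ) :
    ∫ ω, ‖∑ i, X i ω‖ ^ 2 ∂μ = ∑ i, ∫ ω, ‖X i ω‖ ^ 2 ∂μ := by
  have hint : ∀ i j, Integrable (fun ω => ⟪X i ω, X j ω⟫) μ := by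
    intro i j
    rcases eq_or_ne i j with rfl | hij
    · simpa only [real_inner_self_eq_norm_sq] using (hX i).integrable_norm_pow' (p := 2)
    · exact (hindep hij).integrable_bilin ((hX i).integrable one_le_two)
        ((hX j).integrable one_le_two) (innerSL ℝ)
  have horth : ∀ i j, i ≠ j → ∫ ω, ⟪X i ω, X j ω⟫ ∂μ = 0 := fun i j hij =>
    ((hindep hij).integral_bilin ((hX i).integrable one_le_two)
      ((hX j).integrable one_le_two) (innerSL ℝ)).trans (by simp [hmean])
  calc ∫ ω, ‖∑ i, X i ω‖ ^ 2 ∂μ = ∫ ω, ∑ i, ∑ j, ⟪X i ω, X j ω⟫ ∂μ := by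
        simp_rw [← real_inner_self_eq_norm_sq, sum_inner, inner_sum]
    _ = ∑ i, ∑ j, ∫ ω, ⟪X i ω, X j ω⟫ ∂μ := by
        rw [integral_finsetSum _ fun i _ => integrable_finsetSum _ fun j _ => hint i j]
        exact Finset.sum_congr rfl fun i _ => integral_finsetSum _ fun j _ => hint i j
    _ = ∑ i, ∫ ω, ⟪X i ω, X i ω⟫ ∂μ := Finset.sum_congr rfl fun i _ =>
        Finset.sum_eq_single i (fun j _ hji => horth i j hji.symm) (by simp)
    _ = ∑ i, ∫ ω, ‖X i ω‖ ^ 2 ∂μ := by simp_rw [real_inner_self_eq_norm_sq]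

variable [IsProbabilityMeasure μ] {ι α : Type*} [Fintype ι] [Nonempty ι] [Fintype α]
  [MeasurableSpace α] [DiscreteMeasurableSpace α] {X : ι → Ω → α}

theorem integral_norm_sample_mean_sub_sq (hX : ∀ i, Measurable (X i))
    (hindep : Pairwise fun i j => IndepFun (X i) (X j) μ)
    (hunif : ∀ i a, μ {ω | X i ω = a} = (Fintype.card α : ℝ≥0∞)⁻¹) (v : α → E) :
    ∫ ω, ‖(Fintype.card ι : ℝ)⁻¹ • ∑ i, v (X i ω) - (Fintype.card α : ℝ)⁻¹ • ∑ a, v a‖ ^ 2 ∂μ =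
      (Fintype.card ι : ℝ)⁻¹ * ((Fintype.card α : ℝ)⁻¹ * ∑ a, ‖v a‖ ^ 2 -
        ‖(Fintype.card α : ℝ)⁻¹ • ∑ a, v a‖ ^ 2) := by
  set m := (Fintype.card α : ℝ)⁻¹ • ∑ a, v a
  have hmean : ∀ i, μ[fun ω => v (X i ω)] = m := fun i =>
    integral_comp_of_uniform (hX i) (hunif i) v
  have hmoment : ∀ i, ∫ ω, ‖v (X i ω)‖ ^ 2 ∂μ = (Fintype.card α : ℝ)⁻¹ * ∑ a, ‖v a‖ ^ 2 :=
    fun i => integral_comp_of_uniform (hX i) (hunif i) (‖v ·‖ ^ 2)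
  have hcenter : ∀ ω, (Fintype.card ι : ℝ)⁻¹ • ∑ i, v (X i ω) - m =
      (Fintype.card ι : ℝ)⁻¹ • ∑ i, (v (X i ω) - m) := fun ω => by
    rw [Finset.sum_sub_distrib, smul_sub, Finset.sum_const, Finset.card_univ,
      ← Nat.cast_smul_eq_nsmul ℝ, smul_smul, inv_mul_cancel₀ (by positivity), one_smul]
  have hcentered_mean : ∀ i, μ[fun ω => v (X i ω) - m] = 0 := fun i => by
    rw [integral_sub (memLp_one_iff_integrable.1 (memLp_comp_of_finite (hX i) v 1))
      (integrable_const m), hmean, integral_const, probReal_univ, one_smul, sub_self]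
  calc _ = ((Fintype.card ι : ℝ)⁻¹) ^ 2 * ∫ ω, ‖∑ i, (v (X i ω) - m)‖ ^ 2 ∂μ := by
        simp_rw [hcenter, norm_smul, mul_pow,
          Real.norm_of_nonneg (inv_nonneg.2 (Nat.cast_nonneg _))]
        exact integral_const_mul _ _
    _ = ((Fintype.card ι : ℝ)⁻¹) ^ 2 * ∑ i, ∫ ω, ‖v (X i ω) - m‖ ^ 2 ∂μ := by
        rw [integral_norm_sum_sq_of_indepFun (X := fun i ω => v (X i ω) - m)
          (fun i => memLp_comp_of_finite (hX i) (v · - m) 2) hcentered_mean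
          fun i j hij => (hindep hij).comp (φ := (v · - m)) (ψ := (v · - m)) .of_discrete
            .of_discrete]
    _ = ((Fintype.card ι : ℝ)⁻¹) ^ 2 *
          ∑ _i : ι, ((Fintype.card α : ℝ)⁻¹ * ∑ a, ‖v a‖ ^ 2 - ‖m‖ ^ 2) := by
        congr 1
        refine Finset.sum_congr rfl fun i _ => ?_
        rw [← hmean i, integral_norm_sub_integral_sq (memLp_comp_of_finite (hX i) v 2), hmoment]
    _ = _ := by
        rw [Finset.sum_const, Finset.card_univ, nsmul_eq_mul]
        field_simp

theorem integral_norm_sample_mean_sub_sq_le [Nonempty α] (hX : ∀ i, Measurable (X i))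
    (hindep : Pairwise fun i j => IndepFun (X i) (X j) μ)
    (hunif : ∀ i a, μ {ω | X i ω = a} = (Fintype.card α : ℝ≥0∞)⁻¹) {v : α → E} {r : ℝ}
    (hv : ∀ a, ‖v a‖ ≤ r) :
    ∫ ω, ‖(Fintype.card ι : ℝ)⁻¹ • ∑ i, v (X i ω) - (Fintype.card α : ℝ)⁻¹ • ∑ a, v a‖ ^ 2 ∂μ ≤
      (Fintype.card ι : ℝ)⁻¹ * r ^ 2 := by
  rw [integral_norm_sample_mean_sub_sq hX hindep hunif]
  gcongr
  exact (sub_le_self _ (sq_nonneg _)).trans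
    (inv_card_mul_sum_le fun a => pow_le_pow_left₀ (norm_nonneg _) (hv a) 2)

end Probability

theorem lpc_svrg_variance_bound_general
    {Ω : Type*} [MeasureSpace Ω] [IsProbabilityMeasure (ℙ : Measure Ω)]
    {d n N B : ℕ} (hn : 0 < n) (hN : 0 < N) (hB : 0 < B)
    (b dlam : ℕ)
    (lam : ℝ) (L : ℝ)
    (f : Fin n → EuclideanSpace ℝ (Fin d) → ℝ)
    (g : Fin n → EuclideanSpace ℝ (Fin d) → EuclideanSpace ℝ (Fin d))
    (hgrad : ∀ j x, HasGradientAt (f j) (g j x) x)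
    (hsmooth : ∀ j x y, ‖g j x - g j y‖ ≤ L * ‖x - y‖)
    (gF : EuclideanSpace ℝ (Fin d) → EuclideanSpace ℝ (Fin d))
    (hgF : ∀ x, HasGradientAt (fun y => (n : ℝ)⁻¹ * ∑ j, f j y) (gF x) x)
    (x xt : EuclideanSpace ℝ (Fin d))
    -- the mini-batch index samples of the `N` workers
    (I : Fin N → Fin B → Ω → Fin n) (hImeas : ∀ i a, Measurable (I i a))
    (hIindep : iIndepFun (fun p : Fin N × Fin B => I p.1 p.2) ℙ)
    (hIunif : ∀ i a k, ℙ {ω | I i a ω = k} = (n : ℝ≥0∞)⁻¹)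
    -- the variance-reduced local gradients
    (u : Fin N → Ω → EuclideanSpace ℝ (Fin d))
    (hu : ∀ i ω, u i ω = (B : ℝ)⁻¹ • ∑ a, (g (I i a ω) x - g (I i a ω) xt))
    -- the quantized gradients, with conditional mean-squared quantization error ≤ κ‖u_i‖²
    (Y : Fin N → Ω → EuclideanSpace ℝ (Fin d))
    (hYint : ∀ i, Integrable fun ω => ‖Y i ω - u i ω‖ ^ 2)
    (hYcond : ∀ i, ∀ᵐ ω ∂ℙ,
      (ℙ[fun ω' => ‖Y i ω' - u i ω'‖ ^ 2 |
          ⨆ p : Fin N × Fin B, MeasurableSpace.comap (I p.1 p.2) inferInstance]) ω ≤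
        ((d : ℝ) * lam ^ 2 / (4 * ((2 : ℝ) ^ (b - 1) - 1) ^ 2) +
            (dlam : ℝ) * (1 - lam) ^ 2) * ‖u i ω‖ ^ 2) :
    ∫ ω, ‖(N : ℝ)⁻¹ • ∑ i, Y i ω + gF xt - gF x‖ ^ 2 ≤
      2 * L ^ 2 *
          ((d : ℝ) * lam ^ 2 / (4 * ((2 : ℝ) ^ (b - 1) - 1) ^ 2) +
            (dlam : ℝ) * (1 - lam) ^ 2 + 1 / ((N : ℝ) * (B : ℝ))) *
        ‖x - xt‖ ^ 2 := by
  set κ := (d : ℝ) * lam ^ 2 / (4 * ((2 : ℝ) ^ (b - 1) - 1) ^ 2) + (dlam : ℝ) * (1 - lam) ^ 2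
  have : Nonempty (Fin n) := ⟨⟨0, hn⟩⟩
  have : Nonempty (Fin B) := ⟨⟨0, hB⟩⟩
  have : Nonempty (Fin N) := ⟨⟨0, hN⟩⟩
  set φ : Fin n → EuclideanSpace ℝ (Fin d) := fun k => g k x - g k xt
  have hφ : ∀ k, ‖φ k‖ ≤ L * ‖x - xt‖ := fun k => hsmooth k x xt
  have hgF_avg : ∀ y, gF y = (n : ℝ)⁻¹ • ∑ j, g j y := fun y =>
    (hgF y).unique (hasGradientAt_const_mul_sum (hgrad · y) _)
  set e : Ω → EuclideanSpace ℝ (Fin d) := fun ω =>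
    (Fintype.card (Fin N × Fin B) : ℝ)⁻¹ • ∑ p : Fin N × Fin B, φ (I p.1 p.2 ω) -
      (Fintype.card (Fin n) : ℝ)⁻¹ • ∑ k, φ k
  have hsplit : ∀ ω, (N : ℝ)⁻¹ • ∑ i, Y i ω + gF xt - gF x =
      (Fintype.card (Fin N) : ℝ)⁻¹ • ∑ i, (Y i ω - u i ω) + e ω := fun ω => by
    simp only [e, inv_card_smul_sum_prod, Fintype.card_fin, hu, hgF_avg, φ,
      Finset.sum_sub_distrib, smul_sub]
    abel
  have hu_le : ∀ i ω, ‖u i ω‖ ≤ L * ‖x - xt‖ := fun i ω => by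
    rw [hu]
    simpa only [Fintype.card_fin] using norm_inv_card_smul_sum_le fun a => hφ (I i a ω)
  have hquant : ∀ i, ∫ ω, ‖Y i ω - u i ω‖ ^ 2 ≤ κ * (L * ‖x - xt‖) ^ 2 := fun i =>
    integral_le_of_condExp_le_const (iSup_le fun p : Fin N × Fin B => (hImeas p.1 p.2).comap_le)
      ((hYcond i).mono fun ω hω => hω.trans (by gcongr; exact hu_le i ω))
  have hbatch : ∫ ω, ‖e ω‖ ^ 2 ≤ (Fintype.card (Fin N × Fin B) : ℝ)⁻¹ * (L * ‖x - xt‖) ^ 2 :=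
    integral_norm_sample_mean_sub_sq_le (X := fun p : Fin N × Fin B => I p.1 p.2)
      (fun p => hImeas p.1 p.2) (fun p q hpq => hIindep.indepFun hpq)
      (fun p k => by simpa using hIunif p.1 p.2 k) hφ
  have he : Integrable fun ω => ‖e ω‖ ^ 2 :=
    integrable_norm_sample_mean_sub_sq (X := fun p : Fin N × Fin B => I p.1 p.2)
      (fun p => hImeas p.1 p.2) φ _
  rw [integral_congr_ae (.of_forall fun ω => congrArg (‖·‖ ^ 2) (hsplit ω))]
  refine (integral_norm_inv_card_smul_sum_add_sq_le hYint he hquant hbatch).trans_eq ?_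
  simp only [Fintype.card_prod, Fintype.card_fin, Nat.cast_mul]
  field_simp

/-- **Variance bound for the quantized distributed SVRG estimator (Lemma 2(i)).**
Each of `N` workers computes a mini-batch variance-reduced gradient difference `u_i` from `B`
uniform independent indices and quantizes it into `Y_i` with conditional mean-squared error at
most `κ‖u_i‖²`, where `κ = dλ²/(4(2^{b-1}-1)²) + d_λ(1-λ)²`.  Then the averaged estimator
`v = (1/N)∑ Y_i + ∇f(x̃)` satisfies
`E‖v - ∇f(x)‖² ≤ 2L²[dλ²/(4(2^{b-1}-1)²) + d_λ(1-λ)² + 1/(NB)]‖x - x̃‖²`. -/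
theorem lpc_svrg_variance_bound
    {Ω : Type*} [MeasureSpace Ω] [IsProbabilityMeasure (ℙ : Measure Ω)]
    {d n N B : ℕ} (hn : 0 < n) (hN : 0 < N) (hB : 0 < B)
    (b dlam : ℕ) (hb : 2 ≤ b) (hdlam : dlam ≤ d)
    (lam : ℝ) (hlam : lam ∈ Set.Ioc (0 : ℝ) 1) (L : ℝ)
    (f : Fin n → EuclideanSpace ℝ (Fin d) → ℝ)
    (g : Fin n → EuclideanSpace ℝ (Fin d) → EuclideanSpace ℝ (Fin d))
    (hgrad : ∀ j x, HasGradientAt (f j) (g j x) x)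
    (hsmooth : ∀ j x y, ‖g j x - g j y‖ ≤ L * ‖x - y‖)
    (gF : EuclideanSpace ℝ (Fin d) → EuclideanSpace ℝ (Fin d))
    (hgF : ∀ x, HasGradientAt (fun y => (n : ℝ)⁻¹ * ∑ j, f j y) (gF x) x)
    (x xt : EuclideanSpace ℝ (Fin d))
    -- the mini-batch index samples of the `N` workers
    (I : Fin N → Fin B → Ω → Fin n) (hImeas : ∀ i a, Measurable (I i a))
    (hIindep : iIndepFun (fun p : Fin N × Fin B => I p.1 p.2) ℙ)
    (hIunif : ∀ i a k, ℙ {ω | I i a ω = k} = (n : ℝ≥0∞)⁻¹)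
    -- the variance-reduced local gradients
    (u : Fin N → Ω → EuclideanSpace ℝ (Fin d))
    (hu : ∀ i ω, u i ω = (B : ℝ)⁻¹ • ∑ a, (g (I i a ω) x - g (I i a ω) xt))
    -- the quantized gradients, with conditional mean-squared quantization error ≤ κ‖u_i‖²
    (Y : Fin N → Ω → EuclideanSpace ℝ (Fin d)) (hYmeas : ∀ i, Measurable (Y i))
    (hYint : ∀ i, Integrable fun ω => ‖Y i ω - u i ω‖ ^ 2)
    (hYcond : ∀ i, ∀ᵐ ω ∂ℙ,
      (ℙ[fun ω' => ‖Y i ω' - u i ω'‖ ^ 2 |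
          ⨆ p : Fin N × Fin B, MeasurableSpace.comap (I p.1 p.2) inferInstance]) ω ≤
        ((d : ℝ) * lam ^ 2 / (4 * ((2 : ℝ) ^ (b - 1) - 1) ^ 2) +
            (dlam : ℝ) * (1 - lam) ^ 2) * ‖u i ω‖ ^ 2) :
    ∫ ω, ‖(N : ℝ)⁻¹ • ∑ i, Y i ω + gF xt - gF x‖ ^ 2 ≤
      2 * L ^ 2 *
          ((d : ℝ) * lam ^ 2 / (4 * ((2 : ℝ) ^ (b - 1) - 1) ^ 2) +
            (dlam : ℝ) * (1 - lam) ^ 2 + 1 / ((N : ℝ) * (B : ℝ))) *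
        ‖x - xt‖ ^ 2 :=
  lpc_svrg_variance_bound_general hn hN hB b dlam lam L f g hgrad hsmooth gF hgF x xt I hImeas
    hIindep hIunif u hu Y hYint hYcond
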